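/- A family 𝒯 of theories is representable by a default theory (D,W) with D finite if and only if 𝒯 is a finite non-including family of theories such that, denoting by U the intersection of all members of 𝒯, every T ∈ 𝒯 is finitely generated over U, i.e., T = Cn(U ∪ {φ}) for some formula φ. -/
import Mathlib


/-- Propositional formulas over a set of atoms `α`. -/
inductive PropForm (α : Type) : Type
  | atom : α → PropForm α
  | fls  : PropForm α
  | impl : PropForm α → PropForm α → PropForm α

namespace PropForm

/-- Negation `¬φ`, definable as `φ → ⊥`. -/
def neg {α : Type} (φ : PropForm α) : PropForm α := impl φ fls

/-- Conjunction, definable from implication and falsum. -/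
def conj {α : Type} (φ ψ : PropForm α) : PropForm α := (φ.impl ψ.neg).neg

/-- Biimplication `φ ↔ ψ`. -/
def biimp {α : Type} (φ ψ : PropForm α) : PropForm α := conj (φ.impl ψ) (ψ.impl φ)

/-- Evaluation of a formula under a valuation of the atoms. -/
def eval {α : Type} (v : α → Prop) : PropForm α → Prop
  | atom a   => v a
  | fls      => False
  | impl φ ψ => eval v φ → eval v ψ

/-- Renaming/embedding of atoms. -/
def map {α β : Type} (f : α → β) : PropForm α → PropForm β
  | atom a   => atom (f a)
  | fls      => fls
  | impl φ ψ => impl (map f φ) (map f ψ)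

end PropForm

/-- Classical propositional consequence operator. -/
def Cn {α : Type} (S : Set (PropForm α)) : Set (PropForm α) :=
  {φ | ∀ v : α → Prop, (∀ ψ ∈ S, ψ.eval v) → φ.eval v}

/-- A theory: a set of formulas closed under propositional consequence. -/
def IsTheory {α : Type} (S : Set (PropForm α)) : Prop := Cn S ⊆ S

/-- A set of formulas is consistent if its consequences are not the whole language. -/
def Consistent {α : Type} (S : Set (PropForm α)) : Prop := Cn S ≠ Set.univ

/-- A default `α : Γ / β` with prerequisite, finite set of justifications, consequent. -/
structure Default (α : Type) where
  pre : PropForm α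
  jus : Finset (PropForm α)
  con : PropForm α

/-- A default is applicable w.r.t. `S` if no justification's negation follows from `S`. -/
def Default.Applicable {α : Type} (S : Set (PropForm α)) (d : Default α) : Prop :=
  ∀ γ ∈ d.jus, γ.neg ∉ Cn S

/-- The reduct of `D` w.r.t. `S`: the monotone rules `pre/con` of `S`-applicable defaults. -/
def Reduct {α : Type} (D : Set (Default α)) (S : Set (PropForm α)) :
    Set (PropForm α × PropForm α) :=
  {r | ∃ d ∈ D, d.Applicable S ∧ r = (d.pre, d.con)}

/-- `Cn^B(W)`: consequences of `W` in propositional calculus augmented with rules `B`;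
the least set containing `W`, closed under `Cn`, and closed under the rules of `B`. -/
def CnRules {α : Type} (B : Set (PropForm α × PropForm α)) (W : Set (PropForm α)) :
    Set (PropForm α) :=
  ⋂₀ {S | W ⊆ S ∧ Cn S ⊆ S ∧ ∀ r ∈ B, r.1 ∈ S → r.2 ∈ S}

/-- `S` is an extension of the default theory `(D, W)`. -/
def IsExtension {α : Type} (D : Set (Default α)) (W S : Set (PropForm α)) : Prop :=
  S = CnRules (Reduct D S) W

/-- The family of all extensions of `(D, W)`. -/
def ext {α : Type} (D : Set (Default α)) (W : Set (PropForm α)) : Set (Set (PropForm α)) :=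
  {S | IsExtension D W S}

/-- A default is prerequisite-free if its prerequisite is a tautology. -/
def Default.PrereqFree {α : Type} (d : Default α) : Prop :=
  d.pre ∈ Cn (∅ : Set (PropForm α))

/-- A default is normal if it has the form `α : {β} / β`. -/
def Default.Normal {α : Type} (d : Default α) : Prop := d.jus = {d.con}

section Aux
open PropForm
variable {α : Type}

lemma subset_Cn (S : Set (PropForm α)) : S ⊆ Cn S := fun φ hφ _v hv => hv φ hφ

lemma Cn_mono {S T : Set (PropForm α)} (h : S ⊆ T) : Cn S ⊆ Cn T :=
  fun _φ hφ v hv => hφ v (fun ψ hψ => hv ψ (h hψ))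

lemma Cn_Cn (S : Set (PropForm α)) : Cn (Cn S) ⊆ Cn S :=
  fun _φ hφ v hv => hφ v (fun _ψ hψ => hψ v hv)

lemma isTheory_Cn (S : Set (PropForm α)) : IsTheory (Cn S) := Cn_Cn S

lemma Cn_eq_of_theory {T : Set (PropForm α)} (h : IsTheory T) : Cn T = T :=
  Set.Subset.antisymm h (subset_Cn T)

lemma top_mem_Cn (S : Set (PropForm α)) : (PropForm.fls (α := α)).neg ∈ Cn S :=
  fun _v _ hx => hx

lemma negneg_mem_Cn {S : Set (PropForm α)} {φ : PropForm α} :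
    φ.neg.neg ∈ Cn S ↔ φ ∈ Cn S := by
  constructor
  · intro h v hv
    by_contra hc
    exact h v hv (fun h1 => hc h1)
  · intro h v hv hn
    exact hn (h v hv)

lemma cnRules_subset {B : Set (PropForm α × PropForm α)} {W S : Set (PropForm α)}
    (h1 : W ⊆ S) (h2 : Cn S ⊆ S) (h3 : ∀ r ∈ B, r.1 ∈ S → r.2 ∈ S) :
    CnRules B W ⊆ S := Set.sInter_subset_of_mem ⟨h1, h2, h3⟩

lemma subset_cnRules {B : Set (PropForm α × PropForm α)} {W : Set (PropForm α)} :
    W ⊆ CnRules B W := fun φ hφ => Set.mem_sInter.2 (fun _S hS => hS.1 hφ)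

lemma cn_cnRules {B : Set (PropForm α × PropForm α)} {W : Set (PropForm α)} :
    Cn (CnRules B W) ⊆ CnRules B W := fun φ hφ => Set.mem_sInter.2 fun S hS =>
  hS.2.1 (Cn_mono (Set.sInter_subset_of_mem hS) hφ)

lemma isTheory_cnRules (B : Set (PropForm α × PropForm α)) (W : Set (PropForm α)) :
    IsTheory (CnRules B W) := cn_cnRules

lemma rules_cnRules {B : Set (PropForm α × PropForm α)} {W : Set (PropForm α)} :
    ∀ r ∈ B, r.1 ∈ CnRules B W → r.2 ∈ CnRules B W :=
  fun r hr h1 => Set.mem_sInter.2 fun S hS => hS.2.2 r hr (Set.mem_sInter.1 h1 S hS)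

lemma cnRules_mono {B B' : Set (PropForm α × PropForm α)} {W : Set (PropForm α)}
    (h : B ⊆ B') : CnRules B W ⊆ CnRules B' W :=
  cnRules_subset subset_cnRules cn_cnRules (fun r hr => rules_cnRules r (h hr))

lemma cnRules_empty (W : Set (PropForm α)) : CnRules ∅ W = Cn W := by
  apply Set.Subset.antisymm
  · exact cnRules_subset (subset_Cn W) (Cn_Cn W) (fun r hr => absurd hr (Set.notMem_empty r))
  · exact Cn_mono subset_cnRules |>.trans cn_cnRules

lemma cnRules_top (W : Set (PropForm α)) (φ : PropForm α) :
    CnRules {((PropForm.fls (α := α)).neg, φ)} W = Cn (W ∪ {φ}) := by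
  apply Set.Subset.antisymm
  · apply cnRules_subset
    · exact (subset_Cn W).trans (Cn_mono Set.subset_union_left)
    · exact Cn_Cn _
    · rintro r hr _
      rcases Set.mem_singleton_iff.1 hr with rfl
      exact subset_Cn _ (Set.mem_union_right _ rfl)
  · refine (Cn_mono ?_).trans cn_cnRules
    refine Set.union_subset subset_cnRules ?_
    intro ψ hψ
    have h : φ ∈ CnRules {((PropForm.fls (α := α)).neg, φ)} W :=
      rules_cnRules _ (Set.mem_singleton _) (cn_cnRules (top_mem_Cn _))
    rw [Set.mem_singleton_iff.1 hψ]
    exact h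

lemma cnRules_eq_Cn_union (B : Set (PropForm α × PropForm α)) (W : Set (PropForm α)) :
    CnRules B W = Cn (W ∪ {ψ | ∃ r ∈ B, r.1 ∈ CnRules B W ∧ ψ = r.2}) := by
  set C := {ψ | ∃ r ∈ B, r.1 ∈ CnRules B W ∧ ψ = r.2} with hC
  have hsub : Cn (W ∪ C) ⊆ CnRules B W := by
    refine (Cn_mono ?_).trans cn_cnRules
    refine Set.union_subset subset_cnRules ?_
    rintro ψ ⟨r, hr, h1, rfl⟩
    exact rules_cnRules r hr h1
  refine Set.Subset.antisymm (cnRules_subset ?_ (Cn_Cn _) ?_) hsub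
  · exact Set.subset_union_left.trans (subset_Cn _)
  · intro r hr h1
    exact subset_Cn _ (Set.mem_union_right _ ⟨r, hr, hsub h1, rfl⟩)

def conjList : List (PropForm α) → PropForm α
  | [] => PropForm.fls.neg
  | φ :: l => φ.conj (conjList l)

lemma eval_conj {v : α → Prop} {φ ψ : PropForm α} :
    (φ.conj ψ).eval v ↔ φ.eval v ∧ ψ.eval v := by
  simp only [PropForm.conj, PropForm.neg, PropForm.eval]
  tauto

lemma eval_conjList {v : α → Prop} : ∀ {l : List (PropForm α)},
    (conjList l).eval v ↔ ∀ φ ∈ l, φ.eval v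
  | [] => by simp [conjList, PropForm.neg, PropForm.eval]
  | φ :: l => by
    simp [conjList, eval_conj, eval_conjList (l := l)]

lemma Cn_union_congr {W A B : Set (PropForm α)}
    (h : ∀ v : α → Prop, (∀ φ ∈ A, φ.eval v) ↔ (∀ φ ∈ B, φ.eval v)) :
    Cn (W ∪ A) = Cn (W ∪ B) := by
  ext φ
  constructor <;> intro hφ v hv <;> apply hφ v <;> rintro ψ (h1 | h2)
  · exact hv ψ (Set.mem_union_left _ h1)
  · exact (h v).2 (fun χ hχ => hv χ (Set.mem_union_right _ hχ)) ψ h2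
  · exact hv ψ (Set.mem_union_left _ h1)
  · exact (h v).1 (fun χ hχ => hv χ (Set.mem_union_right _ hχ)) ψ h2

lemma Cn_union_finite_eq_single {W C : Set (PropForm α)} (hC : C.Finite) :
    ∃ φ : PropForm α, Cn (W ∪ C) = Cn (W ∪ {φ}) := by
  obtain ⟨l, hl⟩ : ∃ l : List (PropForm α), ∀ ψ, ψ ∈ l ↔ ψ ∈ C := by
    refine ⟨hC.toFinset.toList, fun ψ => ?_⟩
    rw [Finset.mem_toList, Set.Finite.mem_toFinset]
  refine ⟨conjList l, Cn_union_congr fun v => ?_⟩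
  simp only [Set.mem_singleton_iff, forall_eq, eval_conjList]
  constructor
  · intro h φ hφ
    exact h φ ((hl φ).1 hφ)
  · intro h φ hφ
    exact h φ ((hl φ).2 hφ)

lemma reduct_antitone {D : Set (Default α)} {S S' : Set (PropForm α)} (h : S ⊆ S') :
    Reduct D S' ⊆ Reduct D S := by
  rintro r ⟨d, hd, happ, rfl⟩
  exact ⟨d, hd, fun γ hγ hc => happ γ hγ (Cn_mono h hc), rfl⟩

lemma forward_dir {α : Type} (D : Set (Default α)) (W : Set (PropForm α)) (hDfin : D.Finite) :
    (ext D W).Finite ∧ (∀ T ∈ ext D W, IsTheory T) ∧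
      (∀ T ∈ ext D W, ∀ T' ∈ ext D W, T ⊆ T' → T = T') ∧
      ∀ T ∈ ext D W, ∃ φ : PropForm α, T = Cn (⋂₀ ext D W ∪ {φ}) := by
  have hWsub : ∀ T ∈ ext D W, W ⊆ T := by
    intro T hT
    rw [show T = CnRules (Reduct D T) W from hT]
    exact subset_cnRules
  have hth : ∀ T ∈ ext D W, IsTheory T := by
    intro T hT
    rw [show T = CnRules (Reduct D T) W from hT]
    exact isTheory_cnRules _ _
  have hanti : ∀ T ∈ ext D W, ∀ T' ∈ ext D W, T ⊆ T' → T = T' := by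
    intro T hT T' hT' hsub
    refine Set.Subset.antisymm hsub ?_
    calc T' = CnRules (Reduct D T') W := hT'
      _ ⊆ CnRules (Reduct D T) W := cnRules_mono (reduct_antitone hsub)
      _ = T := hT.symm
  refine ⟨?_, hth, hanti, ?_⟩
  · have himg : (fun S => Reduct D S) '' ext D W ⊆
        {B | B ⊆ (fun d : Default α => (d.pre, d.con)) '' D} := by
      rintro B ⟨S, _, rfl⟩ r ⟨d, hd, _, rfl⟩
      exact ⟨d, hd, rfl⟩
    have hfin2 : ((fun S => Reduct D S) '' ext D W).Finite :=
      Set.Finite.subset (hDfin.image _).finite_subsets himg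
    refine Set.Finite.of_finite_image hfin2 ?_
    intro S hS S' hS' heq
    calc S = CnRules (Reduct D S) W := hS
      _ = CnRules (Reduct D S') W := by rw [show Reduct D S = Reduct D S' from heq]
      _ = S' := hS'.symm
  · intro T hT
    have hBfin : (Reduct D T).Finite := by
      refine Set.Finite.subset (hDfin.image (fun d : Default α => (d.pre, d.con))) ?_
      rintro r ⟨d, hd, _, rfl⟩
      exact ⟨d, hd, rfl⟩
    have hTeq : T = CnRules (Reduct D T) W := hT
    have hCfin : {ψ | ∃ r ∈ Reduct D T, r.1 ∈ CnRules (Reduct D T) W ∧ ψ = r.2}.Finite := by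
      refine Set.Finite.subset (hBfin.image Prod.snd) ?_
      rintro ψ ⟨r, hr, _, rfl⟩
      exact ⟨r, hr, rfl⟩
    obtain ⟨φ, hφ⟩ := Cn_union_finite_eq_single (W := W) hCfin
    have hT2 : T = Cn (W ∪ {φ}) := (hTeq.trans (cnRules_eq_Cn_union _ _)).trans hφ
    refine ⟨φ, ?_⟩
    have hφT : φ ∈ T := by
      rw [hT2]
      exact subset_Cn _ (Set.mem_union_right _ rfl)
    have hUsub : ⋂₀ ext D W ⊆ T := Set.sInter_subset_of_mem hT
    have hWU : W ⊆ ⋂₀ ext D W := fun ψ hψ =>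
      Set.mem_sInter.2 fun T' hT' => hWsub T' hT' hψ
    apply Set.Subset.antisymm
    · rw [hT2]
      exact Cn_mono (Set.union_subset_union_left _ hWU)
    · exact (Cn_mono (Set.union_subset hUsub (Set.singleton_subset_iff.2 hφT))).trans (hth T hT)

lemma backward_empty {α : Type} (a : α) :
    ext {(⟨PropForm.fls.neg, {PropForm.atom a}, (PropForm.atom a).neg⟩ : Default α)}
      (∅ : Set (PropForm α)) = ∅ := by
  set p : PropForm α := PropForm.atom a with hp
  set d : Default α := ⟨PropForm.fls.neg, {p}, p.neg⟩ with hd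
  rw [Set.eq_empty_iff_forall_notMem]
  intro S hS
  have hS' : S = CnRules (Reduct {d} S) ∅ := hS
  by_cases happ : d.Applicable S
  · have hred : Reduct {d} S = {(PropForm.fls.neg, p.neg)} := by
      apply Set.Subset.antisymm
      · rintro r ⟨d', hd', _, rfl⟩
        rcases Set.mem_singleton_iff.1 hd' with rfl
        rfl
      · rintro r hr
        rcases Set.mem_singleton_iff.1 hr with rfl
        exact ⟨d, rfl, happ, rfl⟩
    rw [hred, cnRules_top] at hS'
    have h1 : p.neg ∈ S := by
      rw [hS']
      exact subset_Cn _ (Set.mem_union_right _ rfl)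
    exact happ p (Finset.mem_singleton_self p) (subset_Cn S h1)
  · have hred : Reduct {d} S = ∅ := by
      rw [Set.eq_empty_iff_forall_notMem]
      rintro r ⟨d', hd', ha, rfl⟩
      rcases Set.mem_singleton_iff.1 hd' with rfl
      exact happ ha
    rw [hred, cnRules_empty] at hS'
    have h1 : p.neg ∈ Cn S := by
      by_contra hc
      refine happ ?_
      intro γ hγ
      rcases Finset.mem_singleton.1 hγ with rfl
      exact hc
    rw [hS'] at h1
    have h2 : p.neg ∈ Cn (∅ : Set (PropForm α)) := Cn_Cn _ h1
    have h3 := h2 (fun _ => True) (fun ψ hψ => absurd hψ (Set.notMem_empty ψ))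
    exact h3 trivial

lemma backward_nonempty {α : Type} (𝒯 : Set (Set (PropForm α))) (hfin : 𝒯.Finite)
    (hth : ∀ T ∈ 𝒯, IsTheory T)
    (hanti : ∀ T ∈ 𝒯, ∀ T' ∈ 𝒯, T ⊆ T' → T = T')
    (hgen : ∀ T ∈ 𝒯, ∃ φ : PropForm α, T = Cn (⋂₀ 𝒯 ∪ {φ}))
    (hne : 𝒯.Nonempty) :
    ∃ (D : Set (Default α)) (W : Set (PropForm α)), D.Finite ∧ ext D W = 𝒯 := by
  classical
  obtain ⟨T₀, hT₀⟩ := hne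
  haveI : Inhabited (PropForm α) := ⟨PropForm.fls⟩
  choose! φf hφf using hgen
  set U := ⋂₀ 𝒯 with hU
  have hUsub : ∀ T ∈ 𝒯, U ⊆ T := fun T hT => Set.sInter_subset_of_mem hT
  have hφmem : ∀ T ∈ 𝒯, φf T ∈ T := by
    intro T hT
    have h1 : φf T ∈ Cn (U ∪ {φf T}) := subset_Cn _ (Set.mem_union_right _ rfl)
    rw [← hφf T hT] at h1
    exact h1
  have hmem_iff : ∀ T ∈ 𝒯, ∀ T' ∈ 𝒯, φf T' ∈ T → T' = T := by
    intro T hT T' hT' hmem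
    refine hanti T' hT' T hT ?_
    rw [hφf T' hT']
    exact (Cn_mono (Set.union_subset (hUsub T hT) (Set.singleton_subset_iff.2 hmem))).trans
      (hth T hT)
  -- justification finsets
  obtain ⟨jusF, hjusF⟩ : ∃ jusF : Set (PropForm α) → Finset (PropForm α),
      ∀ T γ, γ ∈ jusF T ↔ ∃ T' ∈ 𝒯, T' ≠ T ∧ γ = (φf T').neg := by
    refine ⟨fun T => ((hfin.diff (t := {T})).image (fun T' => (φf T').neg)).toFinset,
      fun T γ => ?_⟩
    rw [Set.Finite.mem_toFinset, Set.mem_image]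
    constructor
    · rintro ⟨T', hT', rfl⟩
      exact ⟨T', hT'.1, hT'.2, rfl⟩
    · rintro ⟨T', h1, h2, rfl⟩
      exact ⟨T', ⟨h1, h2⟩, rfl⟩
  set dT : Set (PropForm α) → Default α :=
    fun T => ⟨PropForm.fls.neg, jusF T, φf T⟩ with hdT
  refine ⟨dT '' 𝒯, U, hfin.image _, ?_⟩
  have happT : ∀ T ∈ 𝒯, (dT T).Applicable T := by
    intro T hT γ hγ
    rcases (hjusF T γ).1 hγ with ⟨T', hT', hne', rfl⟩
    intro hc
    have h1 : φf T' ∈ T := hth T hT (negneg_mem_Cn.1 hc)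
    exact hne' (hmem_iff T hT T' hT' h1)
  have hnotapp : ∀ S : Set (PropForm α), ∀ T ∈ 𝒯, ∀ T' ∈ 𝒯, T' ≠ T →
      φf T' ∈ Cn S → ¬ (dT T).Applicable S := by
    intro S T hT T' hT' hne' hmem happ
    exact happ ((φf T').neg) ((hjusF T _).2 ⟨T', hT', hne', rfl⟩) (negneg_mem_Cn.2 hmem)
  have hredT : ∀ T ∈ 𝒯, Reduct (dT '' 𝒯) T = {(PropForm.fls.neg, φf T)} := by
    intro T hT
    apply Set.Subset.antisymm
    · rintro r ⟨d, ⟨T', hT', rfl⟩, ha, rfl⟩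
      by_cases hTT : T' = T
      · subst hTT; rfl
      · exact absurd ha
          (hnotapp T T' hT' T hT (fun h => hTT h.symm) (subset_Cn T (hφmem T hT)))
    · rintro r hr
      rcases Set.mem_singleton_iff.1 hr with rfl
      exact ⟨dT T, ⟨T, hT, rfl⟩, happT T hT, rfl⟩
  have hext2 : ∀ T ∈ 𝒯, T ∈ ext (dT '' 𝒯) U := by
    intro T hT
    show T = CnRules _ U
    rw [hredT T hT, cnRules_top]
    exact hφf T hT
  apply Set.Subset.antisymm _ hext2
  intro S hS
  have hS' : S = CnRules (Reduct (dT '' 𝒯) S) U := hS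
  by_cases hA : ∃ T ∈ 𝒯, (dT T).Applicable S
  · rcases hA with ⟨T, hT, hTapp⟩
    have hrule : (PropForm.fls.neg, φf T) ∈ Reduct (dT '' 𝒯) S :=
      ⟨dT T, ⟨T, hT, rfl⟩, hTapp, rfl⟩
    have hφS : φf T ∈ CnRules (Reduct (dT '' 𝒯) S) U :=
      rules_cnRules _ hrule (cn_cnRules (top_mem_Cn _))
    rw [← hS'] at hφS
    have hred : Reduct (dT '' 𝒯) S = {(PropForm.fls.neg, φf T)} := by
      apply Set.Subset.antisymm
      · rintro r ⟨d, ⟨T', hT', rfl⟩, ha, rfl⟩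
        by_cases hTT : T' = T
        · subst hTT; rfl
        · exact absurd ha
            (hnotapp S T' hT' T hT (fun h => hTT h.symm) (subset_Cn S hφS))
      · rintro r hr
        rcases Set.mem_singleton_iff.1 hr with rfl
        exact hrule
    have hST : S = T := by
      rw [hφf T hT, ← cnRules_top, ← hred]
      exact hS'
    rw [hST]
    exact hT
  · have hred : Reduct (dT '' 𝒯) S = ∅ := by
      rw [Set.eq_empty_iff_forall_notMem]
      rintro r ⟨d, ⟨T', hT', rfl⟩, ha, rfl⟩
      exact hA ⟨T', hT', ha⟩
    rw [hred, cnRules_empty] at hS'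
    exfalso
    have hnapp : ¬ (dT T₀).Applicable S := fun h => hA ⟨T₀, hT₀, h⟩
    rw [Default.Applicable] at hnapp
    push_neg at hnapp
    rcases hnapp with ⟨γ, hγ, hγc⟩
    rcases (hjusF T₀ γ).1 hγ with ⟨T', hT', hne', rfl⟩
    have h1 : φf T' ∈ Cn S := negneg_mem_Cn.1 hγc
    rw [hS'] at h1
    have h2 : φf T' ∈ T₀ := hth T₀ hT₀ (Cn_mono (hUsub T₀ hT₀) (Cn_Cn U h1))
    exact hne' (hmem_iff T₀ hT₀ T' hT' h2)

end Aux

/-- representability by a default theory with finitely many defaults. -/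
theorem representable_finite_defaults_iff {α : Type} [Denumerable α]
    (𝒯 : Set (Set (PropForm α))) :
    (∃ (D : Set (Default α)) (W : Set (PropForm α)), D.Finite ∧ ext D W = 𝒯) ↔
      (𝒯.Finite ∧ (∀ T ∈ 𝒯, IsTheory T) ∧
        (∀ T ∈ 𝒯, ∀ T' ∈ 𝒯, T ⊆ T' → T = T') ∧
        ∀ T ∈ 𝒯, ∃ φ : PropForm α, T = Cn (⋂₀ 𝒯 ∪ {φ})) := by
  constructor
  · rintro ⟨D, W, hDfin, rfl⟩
    exact forward_dir D W hDfin
  · rintro ⟨hfin, hth, hanti, hgen⟩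
    rcases Set.eq_empty_or_nonempty 𝒯 with rfl | hne
    · exact ⟨_, _, Set.finite_singleton _, backward_empty (Denumerable.ofNat α 0)⟩
    · exact backward_nonempty 𝒯 hfin hth hanti hgen hne
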